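/- Let v ≥ 1 and ℓ ≥ 0 be integers and d_1,…,d_v positive integers. For all s,t ∈ {1,…,v} let Φ_{s,t} ∈ ℝ^{d_s×d_t}, and for each s let Ψ_{s,s} ∈ ℝ^{d_s×d_s} be symmetric positive semidefinite. For each s let P_s ∈ ℝ^{d_s×ℓ} satisfy P_s^T P_s = I_ℓ and R(P_s) ⊆ R(Ψ_{s,s}). Define Π_s = I_{d_s} − P_s P_s^T, Φ_{s,t}^{(ℓ)} = Π_s Φ_{s,t} Π_t, Ψ_{s,s}^{(ℓ)} = Π_s Ψ_{s,s} Π_s, and for a tuple q = (q_1,…,q_v) with q_s ∈ ℝ^{d_s} define f(q) = Σ_{s=1}^v Σ_{t=1}^v q_s^T Φ_{s,t} q_t and f_ℓ(q) = Σ_{s=1}^v Σ_{t=1}^v q_s^T Φ_{s,t}^{(ℓ)} q_t. Then a tuple q satisfies [Σ_{s=1}^v q_s^T Ψ_{s,s} q_s = 1, q_s ∈ R(Ψ_{s,s}) for all s, and P_s^T q_s = 0 for all s] if and only if it satisfies [Σ_{s=1}^v q_s^T Ψ_{s,s}^{(ℓ)} q_s = 1 and q_s ∈ R(Ψ_{s,s}^{(ℓ)})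 for all s]; moreover, for every tuple q in this common feasible set, f(q) = f_ℓ(q). -/

import Mathlib

/-!
Let `Π = 1 - P Pᵀ`. The constraint `Pᵀ q = 0` says `Π q = q`, and for such `q` every compressed
form `q ⬝ᵥ (Π A Π') q'` equals `q ⬝ᵥ A q'`; this matches the normalisations and the objectives.
For the ranges, `R(Π Ψ Π) ⊆ R(Ψ)` since `Π Ψ u = Ψ u - P (Pᵀ Ψ u)` and `R(P) ⊆ R(Ψ)`; conversely,
factoring `Ψ = Sᴴ S` gives `R(Π Ψ Π) = R((S Π)ᴴ (S Π)) = R(Π Sᴴ) ⊇ Π R(Ψ)`, which contains every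
`q ∈ R(Ψ)` with `Π q = q`.
-/

open Matrix

open scoped ComplexOrder

namespace Matrix

variable {m n : Type*} [Fintype m] [Fintype n]

theorem range_mulVecLin_conjTranspose_mul_self {R : Type*} [Field R] [PartialOrder R] [StarRing R]
    [StarOrderedRing R] (A : Matrix m n R) :
    LinearMap.range (Aᴴ * A).mulVecLin = LinearMap.range Aᴴ.mulVecLin := by
  refine Submodule.eq_of_le_of_finrank_le ?_ ?_
  · rintro _ ⟨w, rfl⟩
    exact ⟨A *ᵥ w, mulVec_mulVec _ _ _⟩
  · exact ((rank_conjTranspose_mul_self A).trans (rank_conjTranspose A).symm).ge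

theorem PosSemidef.exists_eq_conjTranspose_mul_self {𝕜 : Type*} [RCLike 𝕜] {A : Matrix n n 𝕜}
    (hA : A.PosSemidef) : ∃ S : Matrix n n 𝕜, A = Sᴴ * S := by
  classical
  open scoped MatrixOrder in
  exact ⟨CFC.sqrt A, by
    rw [← star_eq_conjTranspose, (CFC.sqrt_nonneg A).isSelfAdjoint.star_eq,
      CFC.sqrt_mul_sqrt_self A hA.nonneg]⟩

theorem PosSemidef.map_range_le_range_conjTranspose_mul_mul {𝕜 : Type*} [RCLike 𝕜]
    {A : Matrix n n 𝕜} (hA : A.PosSemidef) (B : Matrix n m 𝕜) :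
    (LinearMap.range A.mulVecLin).map Bᴴ.mulVecLin ≤ LinearMap.range (Bᴴ * A * B).mulVecLin := by
  obtain ⟨S, rfl⟩ := hA.exists_eq_conjTranspose_mul_self
  rintro _ ⟨_, ⟨w, rfl⟩, rfl⟩
  have hfactor : Bᴴ * (Sᴴ * S) * B = (S * B)ᴴ * (S * B) := by
    simp only [conjTranspose_mul, Matrix.mul_assoc]
  rw [hfactor, range_mulVecLin_conjTranspose_mul_self]
  exact ⟨S *ᵥ w, by simp [mulVec_mulVec]⟩

section OrthogonalComplement

variable {R : Type*} [CommRing R] [DecidableEq m] (P : Matrix m n R)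

omit [Fintype m] in
theorem transpose_one_sub_mul_transpose : (1 - P * Pᵀ)ᵀ = 1 - P * Pᵀ := by
  rw [transpose_sub, transpose_one, transpose_mul, transpose_transpose]

variable {P}

theorem transpose_mul_one_sub_mul_transpose [DecidableEq n] (hP : Pᵀ * P = 1) :
    Pᵀ * (1 - P * Pᵀ) = 0 := by
  rw [Matrix.mul_sub, Matrix.mul_one, ← Matrix.mul_assoc, hP, Matrix.one_mul, sub_self]

theorem one_sub_mul_transpose_mulVec_of_transpose_mulVec_eq_zero {x : m → R}
    (hx : Pᵀ *ᵥ x = 0) : (1 - P * Pᵀ) *ᵥ x = x := by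
  rw [sub_mulVec, one_mulVec, ← mulVec_mulVec, hx, mulVec_zero, sub_zero]

theorem vecMul_one_sub_mul_transpose_of_transpose_mulVec_eq_zero {x : m → R}
    (hx : Pᵀ *ᵥ x = 0) : x ᵥ* (1 - P * Pᵀ) = x := by
  rw [← mulVec_transpose, transpose_one_sub_mul_transpose,
    one_sub_mul_transpose_mulVec_of_transpose_mulVec_eq_zero hx]

theorem range_one_sub_mul_transpose_mul_le {A : Matrix m m R}
    (hPA : LinearMap.range P.mulVecLin ≤ LinearMap.range A.mulVecLin) :
    LinearMap.range ((1 - P * Pᵀ) * A).mulVecLin ≤ LinearMap.range A.mulVecLin := by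
  rintro _ ⟨w, rfl⟩
  rw [mulVecLin_apply, Matrix.sub_mul, Matrix.one_mul, sub_mulVec, Matrix.mul_assoc,
    ← mulVec_mulVec]
  exact sub_mem ⟨w, rfl⟩ (hPA ⟨_, rfl⟩)

end OrthogonalComplement

theorem dotProduct_mul_mul_mulVec_of_vecMul_eq_self_of_mulVec_eq_self {R : Type*}
    [CommSemiring R] {B : Matrix m m R} {A : Matrix m n R} {C : Matrix n n R} {x : m → R}
    {y : n → R} (hx : x ᵥ* B = x) (hy : C *ᵥ y = y) :
    x ⬝ᵥ (B * A * C) *ᵥ y = x ⬝ᵥ A *ᵥ y := by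
  rw [← mulVec_mulVec, hy, ← mulVec_mulVec, dotProduct_mulVec, hx]

theorem mem_range_one_sub_mul_transpose_mul_mul_iff [DecidableEq m] [DecidableEq n]
    {A : Matrix m m ℝ} {P : Matrix m n ℝ} (hA : A.PosSemidef) (hP : Pᵀ * P = 1)
    (hPA : LinearMap.range P.mulVecLin ≤ LinearMap.range A.mulVecLin) {x : m → ℝ} :
    x ∈ LinearMap.range ((1 - P * Pᵀ) * A * (1 - P * Pᵀ)).mulVecLin ↔
      x ∈ LinearMap.range A.mulVecLin ∧ Pᵀ *ᵥ x = 0 := by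
  constructor
  · rintro ⟨w, rfl⟩
    refine ⟨?_, ?_⟩
    · exact range_one_sub_mul_transpose_mul_le hPA ⟨(1 - P * Pᵀ) *ᵥ w, mulVec_mulVec _ _ _⟩
    · rw [mulVecLin_apply, mulVec_mulVec, ← Matrix.mul_assoc, ← Matrix.mul_assoc,
        transpose_mul_one_sub_mul_transpose hP, Matrix.zero_mul, Matrix.zero_mul, zero_mulVec]
  · rintro ⟨⟨w, rfl⟩, hx⟩
    have hsymm : (1 - P * Pᵀ)ᴴ = 1 - P * Pᵀ :=
      (conjTranspose_eq_transpose_of_trivial _).trans (transpose_one_sub_mul_transpose P)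
    have hmem := hA.map_range_le_range_conjTranspose_mul_mul (1 - P * Pᵀ) ⟨_, ⟨w, rfl⟩, rfl⟩
    rwa [hsymm, mulVecLin_apply,
      one_sub_mul_transpose_mulVec_of_transpose_mulVec_eq_zero hx] at hmem

end Matrix

theorem deflated_feasible_set_eq_general
    (v : ℕ) (ℓ : ℕ) (d : Fin v → ℕ)
    (Φ : ∀ s t : Fin v, Matrix (Fin (d s)) (Fin (d t)) ℝ)
    (Ψ : ∀ s : Fin v, Matrix (Fin (d s)) (Fin (d s)) ℝ)
    (hΨ : ∀ s, (Ψ s).PosSemidef)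
    (P : ∀ s : Fin v, Matrix (Fin (d s)) (Fin ℓ) ℝ)
    (hP : ∀ s, (P s)ᵀ * P s = 1)
    (hPR : ∀ s, ∀ x : Fin (d s) → ℝ,
      (∃ w, (P s).mulVec w = x) → ∃ w, (Ψ s).mulVec w = x)
    (Proj : ∀ s : Fin v, Matrix (Fin (d s)) (Fin (d s)) ℝ)
    (hProj : ∀ s, Proj s = 1 - P s * (P s)ᵀ)
    (Φℓ : ∀ s t : Fin v, Matrix (Fin (d s)) (Fin (d t)) ℝ)
    (hΦℓ : ∀ s t, Φℓ s t = Proj s * Φ s t * Proj t)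
    (Ψℓ : ∀ s : Fin v, Matrix (Fin (d s)) (Fin (d s)) ℝ)
    (hΨℓ : ∀ s, Ψℓ s = Proj s * Ψ s * Proj s)
    (q : ∀ s : Fin v, Fin (d s) → ℝ) :
    ((∑ s, q s ⬝ᵥ (Ψ s).mulVec (q s) = 1 ∧
        (∀ s, ∃ w, (Ψ s).mulVec w = q s) ∧
        (∀ s, (P s)ᵀ.mulVec (q s) = 0))
      ↔ (∑ s, q s ⬝ᵥ (Ψℓ s).mulVec (q s) = 1 ∧
          (∀ s, ∃ w, (Ψℓ s).mulVec w = q s)))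
    ∧ ((∑ s, q s ⬝ᵥ (Ψ s).mulVec (q s) = 1 ∧
        (∀ s, ∃ w, (Ψ s).mulVec w = q s) ∧
        (∀ s, (P s)ᵀ.mulVec (q s) = 0))
      → ∑ s, ∑ t, q s ⬝ᵥ (Φ s t).mulVec (q t)
          = ∑ s, ∑ t, q s ⬝ᵥ (Φℓ s t).mulVec (q t)) := by
  have hrange (s) : (∃ w, (Ψℓ s).mulVec w = q s) ↔
      (∃ w, (Ψ s).mulVec w = q s) ∧ (P s)ᵀ.mulVec (q s) = 0 := by
    rw [hΨℓ, hProj]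
    exact mem_range_one_sub_mul_transpose_mul_mul_iff (hΨ s) (hP s) (hPR s)
  have hform (s t) (A : Matrix (Fin (d s)) (Fin (d t)) ℝ) (hs : (P s)ᵀ *ᵥ q s = 0)
      (ht : (P t)ᵀ *ᵥ q t = 0) : q s ⬝ᵥ (Proj s * A * Proj t) *ᵥ q t = q s ⬝ᵥ A *ᵥ q t := by
    rw [hProj, hProj]
    exact dotProduct_mul_mul_mulVec_of_vecMul_eq_self_of_mulVec_eq_self
      (vecMul_one_sub_mul_transpose_of_transpose_mulVec_eq_zero hs)
      (one_sub_mul_transpose_mulVec_of_transpose_mulVec_eq_zero ht)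
  refine ⟨⟨fun ⟨hsum, hΨq, hPq⟩ => ⟨?_, fun s => (hrange s).2 ⟨hΨq s, hPq s⟩⟩,
    fun ⟨hsum, hΨℓq⟩ => ?_⟩, fun ⟨_, _, hPq⟩ => ?_⟩
  · simpa only [hΨℓ, hform _ _ _ (hPq _) (hPq _)] using hsum
  · have hPq s := ((hrange s).1 (hΨℓq s)).2
    refine ⟨?_, fun s => ((hrange s).1 (hΨℓq s)).1, hPq⟩
    simpa only [hΨℓ, hform _ _ _ (hPq _) (hPq _)] using hsum
  · simp only [hΦℓ, hform _ _ _ (hPq _) (hPq _)]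

/-- Theorem 1 (equivalence of the deflated problem): the feasible sets of the
constrained problem (with orthogonality to previously computed columns) and of
the projected/deflated problem coincide, and the objectives `f` and `f_ℓ` agree
on this common feasible set. -/
theorem deflated_feasible_set_eq
    (v : ℕ) (hv : 1 ≤ v) (ℓ : ℕ) (d : Fin v → ℕ) (hd : ∀ s, 0 < d s)
    (Φ : ∀ s t : Fin v, Matrix (Fin (d s)) (Fin (d t)) ℝ)
    (Ψ : ∀ s : Fin v, Matrix (Fin (d s)) (Fin (d s)) ℝ)
    (hΨ : ∀ s, (Ψ s).PosSemidef)
    (P : ∀ s : Fin v, Matrix (Fin (d s)) (Fin ℓ) ℝ)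
    (hP : ∀ s, (P s)ᵀ * P s = 1)
    (hPR : ∀ s, ∀ x : Fin (d s) → ℝ,
      (∃ w, (P s).mulVec w = x) → ∃ w, (Ψ s).mulVec w = x)
    (Proj : ∀ s : Fin v, Matrix (Fin (d s)) (Fin (d s)) ℝ)
    (hProj : ∀ s, Proj s = 1 - P s * (P s)ᵀ)
    (Φℓ : ∀ s t : Fin v, Matrix (Fin (d s)) (Fin (d t)) ℝ)
    (hΦℓ : ∀ s t, Φℓ s t = Proj s * Φ s t * Proj t)
    (Ψℓ : ∀ s : Fin v, Matrix (Fin (d s)) (Fin (d s)) ℝ)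
    (hΨℓ : ∀ s, Ψℓ s = Proj s * Ψ s * Proj s)
    (q : ∀ s : Fin v, Fin (d s) → ℝ) :
    ((∑ s, q s ⬝ᵥ (Ψ s).mulVec (q s) = 1 ∧
        (∀ s, ∃ w, (Ψ s).mulVec w = q s) ∧
        (∀ s, (P s)ᵀ.mulVec (q s) = 0))
      ↔ (∑ s, q s ⬝ᵥ (Ψℓ s).mulVec (q s) = 1 ∧
          (∀ s, ∃ w, (Ψℓ s).mulVec w = q s)))
    ∧ ((∑ s, q s ⬝ᵥ (Ψ s).mulVec (q s) = 1 ∧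
        (∀ s, ∃ w, (Ψ s).mulVec w = q s) ∧
        (∀ s, (P s)ᵀ.mulVec (q s) = 0))
      → ∑ s, ∑ t, q s ⬝ᵥ (Φ s t).mulVec (q t)
          = ∑ s, ∑ t, q s ⬝ᵥ (Φℓ s t).mulVec (q t)) :=
  deflated_feasible_set_eq_general v ℓ d Φ Ψ hΨ P hP hPR Proj hProj Φℓ hΦℓ Ψℓ hΨℓ q
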